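/- For all integers n ≥ k ≥ 0, the number V(n,k) = 4^{n−k}·T(2n+1, 2k+1) equals the number of set partitions of {1,…,2n+1} into exactly 2k+1 blocks, each of odd cardinality. -/

import Mathlib

open Polynomial

/-- The numbers `V n k = 4^(n-k) * T (2n+1) (2k+1)`, where `T` are the central factorial
numbers of the second kind. -/
def V : ℕ → ℕ → ℕ
  | 0, 0 => 1
  | 0, _ + 1 => 0
  | n + 1, 0 => V n 0
  | n + 1, k + 1 => V n k + (2 * (k + 1) + 1) ^ 2 * V n (k + 1)

/-!
Labelling the `j` blocks of a partition of `Fin m` by `Fin j` turns it into a map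
`Fin m → Fin j` whose fibres are the blocks, so there are `j!` times as many maps with all fibres
odd as partitions into `j` odd blocks. Since `1 - (-1) ^ c` is `2` for odd `c` and `0` for even `c`,
expanding `∏ i, (1 - (-1) ^ #f⁻¹(i))` and summing over all `f` shows that `2 ^ j` times the number
`A m j` of such maps is `∑ s, (-1) ^ s C(j, s) (j - 2s) ^ m`. From
`(j - 2s) ^ 2 - j ^ 2 = -4 s (j - s)` and `s (j - s) C(j, s) = j (j - 1) C(j - 2, s - 1)` we get
`A (m + 2) j = j ^ 2 A m j + j (j - 1) A m (j - 2)`, which after dividing by `j!` is the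
recurrence defining `V`.
-/

open Finset

namespace Finpartition

variable {α ι : Type*} [Fintype α] [DecidableEq α] [DecidableEq ι]

def label (P : Finpartition (univ : Finset α)) (e : P.parts ≃ ι) (x : α) : ι :=
  e ⟨P.part x, P.part_mem.2 (mem_univ x)⟩

theorem filter_label_eq (P : Finpartition (univ : Finset α)) (e : P.parts ≃ ι) (i : ι) :
    ({x | P.label e x = i} : Finset α) = e.symm i := by
  ext x
  rw [mem_filter, label, ← Equiv.eq_symm_apply, Subtype.ext_iff,
    P.part_eq_iff_mem (e.symm i).2]
  simp

theorem exists_label_eq (f : α → ι) (hf : ∀ i, ({x | f x = i} : Finset α).Nonempty) :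
    ∃ (P : Finpartition (univ : Finset α)) (e : P.parts ≃ ι), P.label e = f := by
  set P := ofSetoid (Setoid.ker f)
  have part_eq (x : α) : P.part x = ({y | f y = f x} : Finset α) := by
    ext y
    rw [mem_part_ofSetoid_iff_rel, Setoid.ker_def, mem_filter]
    simp [eq_comm]
  have fiber_mem (i : ι) : ({x | f x = i} : Finset α) ∈ P.parts := by
    obtain ⟨x, hx⟩ := hf i
    rw [← (mem_filter.1 hx).2, ← part_eq]
    exact P.part_mem.2 (mem_univ x)
  let fiber : ι → P.parts := fun i => ⟨_, fiber_mem i⟩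
  have fiber_bijective : Function.Bijective fiber := by
    refine ⟨fun i i' h => ?_, fun ⟨B, hB⟩ => ?_⟩
    · obtain ⟨x, hx⟩ := hf i
      have hx' : x ∈ (fiber i').1 := h ▸ (hx : x ∈ (fiber i).1)
      exact (mem_filter.1 hx).2.symm.trans (mem_filter.1 hx').2
    · obtain ⟨x, hx⟩ := P.nonempty_of_mem_parts hB
      exact ⟨f x, Subtype.ext <| by simp only [fiber]; rw [← part_eq, P.part_eq_of_mem hB hx]⟩
  refine ⟨P, (Equiv.ofBijective fiber fiber_bijective).symm, funext fun x => ?_⟩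
  rw [label, Equiv.symm_apply_eq]
  exact Subtype.ext (part_eq x)

variable [Fintype ι]

theorem parts_eq_image_filter_label (P : Finpartition (univ : Finset α)) (e : P.parts ≃ ι) :
    P.parts = univ.image fun i => ({x | P.label e x = i} : Finset α) := by
  ext B
  simp only [filter_label_eq, mem_image, mem_univ, true_and]
  exact ⟨fun hB => ⟨e ⟨B, hB⟩, by simp⟩, by rintro ⟨i, rfl⟩; exact (e.symm i).2⟩

theorem label_injective :
    Function.Injective fun q : Σ P : Finpartition (univ : Finset α), P.parts ≃ ι =>
      q.1.label q.2 := by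
  rintro ⟨P, e⟩ ⟨P', e'⟩ h
  simp only at h
  obtain rfl : P = P' := Finpartition.ext <| by
    rw [parts_eq_image_filter_label P e, parts_eq_image_filter_label P' e', h]
  congr 1
  ext ⟨B, hB⟩ : 1
  obtain ⟨x, hx⟩ := P.nonempty_of_mem_parts hB
  have hxB : (⟨P.part x, P.part_mem.2 (mem_univ x)⟩ : P.parts) = ⟨B, hB⟩ :=
    Subtype.ext (P.part_eq_of_mem hB hx)
  simpa [label, hxB] using congrFun h x

end Finpartition

section Fibers

open Finpartition

variable {α ι : Type*} [Fintype α] [DecidableEq α] [Fintype ι] [DecidableEq ι]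

theorem card_fiber_pred_eq_factorial_mul_card_finpartition {p : ℕ → Prop} (hp : ¬ p 0) :
    Nat.card {f : α → ι // ∀ i, p #{x | f x = i}} =
      (Fintype.card ι).factorial * Nat.card {P : Finpartition (univ : Finset α) //
        #P.parts = Fintype.card ι ∧ ∀ B ∈ P.parts, p #B} := by
  set Good := {P : Finpartition (univ : Finset α) //
    #P.parts = Fintype.card ι ∧ ∀ B ∈ P.parts, p #B}
  let Ψ : (Σ P : Good, P.1.parts ≃ ι) → {f : α → ι // ∀ i, p #{x | f x = i}} :=
    fun q => ⟨q.1.1.label q.2, fun i => by rw [filter_label_eq]; exact q.1.2.2 _ (q.2.symm i).2⟩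
  have hΨ : Function.Bijective Ψ := by
    refine ⟨fun q q' h => ?_, fun ⟨f, hf⟩ => ?_⟩
    · obtain ⟨⟨P, hP⟩, e⟩ := q
      obtain ⟨⟨P', hP'⟩, e'⟩ := q'
      obtain ⟨rfl, he⟩ := Sigma.mk.inj_iff.1 (label_injective (congrArg Subtype.val h))
      cases eq_of_heq he
      rfl
    · have hne (i : ι) : ({x | f x = i} : Finset α).Nonempty := by
        rw [← card_pos, Nat.pos_iff_ne_zero]
        exact fun h0 => hp (h0 ▸ hf i)
      obtain ⟨P, e, rfl⟩ := exists_label_eq f hne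
      have hgood : #P.parts = Fintype.card ι ∧ ∀ B ∈ P.parts, p #B := by
        refine ⟨by rw [← Fintype.card_coe, Fintype.card_congr e], fun B hB => ?_⟩
        have := hf (e ⟨B, hB⟩)
        rwa [filter_label_eq, Equiv.symm_apply_apply] at this
      exact ⟨⟨⟨P, hgood⟩, e⟩, rfl⟩
  have := Fintype.ofFinite Good
  have card_labellings (P : Good) : Nat.card (P.1.parts ≃ ι) = (Fintype.card ι).factorial := by
    have hcard : Fintype.card P.1.parts = Fintype.card ι := by rw [Fintype.card_coe, P.2.1]
    rw [Nat.card_eq_fintype_card, Fintype.card_equiv (Fintype.equivOfCardEq hcard), hcard]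
  rw [← Nat.card_congr (Equiv.ofBijective Ψ hΨ), Nat.card_sigma]
  simp_rw [card_labellings, sum_const, card_univ, smul_eq_mul, Nat.card_eq_fintype_card, mul_comm]

end Fibers

def signedPowerSum (m j : ℕ) : ℤ :=
  ∑ s ∈ range (j + 1), (-1) ^ s * j.choose s * ((j : ℤ) - 2 * s) ^ m

theorem choose_add_two_mul_mul_sub_eq {j t : ℕ} (ht : t ≤ j) :
    ((j + 2).choose (t + 1) * (t + 1) * ((j : ℤ) + 1 - t) : ℤ) =
      (j + 2) * (j + 1) * j.choose t := by
  have h1 := Nat.add_one_mul_choose_eq (j + 1) t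
  have h2 := Nat.choose_mul_succ_eq j t
  have h3 : ((j + 1 - t : ℕ) : ℤ) = (j : ℤ) + 1 - t := by push_cast [ht.trans j.le_succ]; ring
  rw [← h3]
  exact_mod_cast (by rw [← h1, mul_assoc, ← h2]; ring : _ = _)

theorem signedPowerSum_add_two (m j : ℕ) :
    signedPowerSum (m + 2) (j + 2) =
      (j + 2) ^ 2 * signedPowerSum m (j + 2) + 4 * ((j + 2) * (j + 1)) * signedPowerSum m j := by
  have diff : signedPowerSum (m + 2) (j + 2) - (j + 2) ^ 2 * signedPowerSum m (j + 2) =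
      ∑ s ∈ range (j + 3), -4 * ((-1) ^ s * ((j + 2).choose s * s * ((j : ℤ) + 2 - s)) *
        ((j : ℤ) + 2 - 2 * s) ^ m) := by
    rw [signedPowerSum, signedPowerSum, mul_sum, ← sum_sub_distrib]
    refine sum_congr rfl fun s _ => ?_
    push_cast
    ring
  rw [← sub_eq_iff_eq_add', diff, sum_range_succ', sum_range_succ, signedPowerSum, mul_sum]
  simp only [Nat.cast_zero, mul_zero, zero_mul, add_zero, Nat.cast_add, Nat.cast_one]
  rw [show (j : ℤ) + 2 - (j + 1 + 1) = 0 by ring]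
  simp only [mul_zero, zero_mul, add_zero]
  refine sum_congr rfl fun t ht => ?_
  have := choose_add_two_mul_mul_sub_eq (Nat.lt_succ_iff.1 (mem_range.1 ht))
  linear_combination (-4 * (-1) ^ (t + 1) * ((j : ℤ) - 2 * t) ^ m) * this

section SignExpansion

variable {α ι : Type*} [Fintype α] [Fintype ι] [DecidableEq ι]

theorem prod_neg_one_pow_card_fiber (f : α → ι) (S : Finset ι) :
    ∏ i ∈ S, (-1 : ℤ) ^ #{x | f x = i} = ∏ x, if f x ∈ S then -1 else 1 := by
  rw [← prod_fiberwise univ f, ← Fintype.prod_ite_mem]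
  refine Finset.prod_congr rfl fun i _ => ?_
  rw [Finset.prod_congr rfl fun x hx => by rw [(mem_filter.1 hx).2], prod_const]
  split_ifs <;> simp

variable [DecidableEq α]

theorem sum_prod_ite_mem_eq_pow (S : Finset ι) :
    ∑ f : α → ι, ∏ x, (if f x ∈ S then -1 else 1 : ℤ) =
      ((Fintype.card ι : ℤ) - 2 * #S) ^ Fintype.card α := by
  rw [← Fintype.prod_sum (fun (_ : α) (i : ι) => if i ∈ S then (-1 : ℤ) else 1), prod_const,
    card_univ, sum_ite, sum_const, sum_const, filter_not, filter_mem_eq_inter, univ_inter,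
    card_sdiff_of_subset (subset_univ S), card_univ]
  simp only [Nat.cast_sub (card_le_univ S), nsmul_eq_mul, mul_neg, mul_one]
  ring

theorem two_pow_card_mul_card_odd_fibers :
    2 ^ Fintype.card ι * (Nat.card {f : α → ι // ∀ i, Odd #{x | f x = i}} : ℤ) =
      signedPowerSum (Fintype.card α) (Fintype.card ι) := by
  have parity (c : ℕ) : 1 - (-1 : ℤ) ^ c = if Odd c then 2 else 0 := by
    rcases Nat.even_or_odd c with h | h
    · simp [h.neg_one_pow, Nat.not_odd_iff_even.2 h]
    · rw [h.neg_one_pow, if_pos h]; norm_num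
  calc 2 ^ Fintype.card ι * (Nat.card {f : α → ι // ∀ i, Odd #{x | f x = i}} : ℤ)
      = ∑ f : α → ι, ∏ i, (1 - (-1 : ℤ) ^ #{x | f x = i}) := by
        simp_rw [Nat.card_eq_fintype_card, Fintype.card_subtype, parity, Fintype.prod_ite_zero,
          prod_const, card_univ]
        rw [sum_ite, sum_const_zero, add_zero, sum_const, nsmul_eq_mul, mul_comm]
    _ = ∑ S : Finset ι, (-1) ^ #S * ((Fintype.card ι : ℤ) - 2 * #S) ^ Fintype.card α := by
        simp_rw [sub_eq_add_neg (1 : ℤ), add_comm (1 : ℤ), Fintype.prod_add, prod_const_one,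
          mul_one]
        rw [sum_comm]
        simp_rw [prod_neg, prod_neg_one_pow_card_fiber, ← mul_sum, sum_prod_ite_mem_eq_pow]
    _ = _ := by
        rw [← powerset_univ, sum_powerset_apply_card
          (fun s => (-1) ^ s * ((Fintype.card ι : ℤ) - 2 * s) ^ Fintype.card α), card_univ,
          signedPowerSum]
        simp_rw [nsmul_eq_mul]
        refine sum_congr rfl fun s _ => by ring

end SignExpansion

noncomputable def oddFiberCount (m j : ℕ) : ℕ :=
  Nat.card {f : Fin m → Fin j // ∀ i, Odd #{x | f x = i}}

theorem two_pow_mul_oddFiberCount (m j : ℕ) :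
    2 ^ j * (oddFiberCount m j : ℤ) = signedPowerSum m j := by
  rw [oddFiberCount]
  simpa only [Fintype.card_fin] using two_pow_card_mul_card_odd_fibers (α := Fin m) (ι := Fin j)

theorem oddFiberCount_add_two (m j : ℕ) :
    oddFiberCount (m + 2) (j + 2) =
      (j + 2) ^ 2 * oddFiberCount m (j + 2) + (j + 2) * (j + 1) * oddFiberCount m j := by
  have h := signedPowerSum_add_two m j
  simp only [← two_pow_mul_oddFiberCount] at h
  have h2 : (2 : ℤ) ^ (j + 2) ≠ 0 := by positivity
  have : (oddFiberCount (m + 2) (j + 2) : ℤ) =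
      (j + 2) ^ 2 * oddFiberCount m (j + 2) + (j + 2) * (j + 1) * oddFiberCount m j :=
    mul_left_cancel₀ h2 (by rw [h, pow_add]; ring)
  exact_mod_cast this

theorem oddFiberCount_eq_zero_of_lt {m j : ℕ} (h : m < j) : oddFiberCount m j = 0 := by
  rw [oddFiberCount, Nat.card_eq_zero]
  refine Or.inl ⟨fun ⟨f, hf⟩ => h.not_ge ?_⟩
  simpa using Fintype.card_le_of_surjective f fun i => by
    obtain ⟨x, hx⟩ := card_pos.1 (hf i).pos
    exact ⟨x, (mem_filter.1 hx).2⟩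

theorem oddFiberCount_one_of_odd {m : ℕ} (hm : Odd m) : oddFiberCount m 1 = 1 := by
  rw [oddFiberCount, Nat.card_eq_one_iff_unique]
  refine ⟨⟨fun f g => Subtype.ext (Subsingleton.elim _ _)⟩, ⟨⟨fun _ => 0, fun i => ?_⟩⟩⟩
  simpa [Subsingleton.elim i 0] using hm

theorem V_zero_right (n : ℕ) : V n 0 = 1 := by
  induction n with
  | zero => rfl
  | succ n ih => rwa [V]

theorem oddFiberCount_eq_factorial_mul_V (n k : ℕ) :
    oddFiberCount (2 * n + 1) (2 * k + 1) = (2 * k + 1).factorial * V n k := by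
  induction n generalizing k with
  | zero =>
    cases k with
    | zero => exact oddFiberCount_one_of_odd odd_one
    | succ k => rw [oddFiberCount_eq_zero_of_lt (by omega)]; rfl
  | succ n ih =>
    cases k with
    | zero => rw [oddFiberCount_one_of_odd (odd_two_mul_add_one _), V_zero_right]; rfl
    | succ k =>
      have hfac : (2 * (k + 1) + 1).factorial =
          (2 * (k + 1) + 1) * (2 * k + 2) * (2 * k + 1).factorial := by
        rw [show 2 * (k + 1) + 1 = 2 * k + 1 + 1 + 1 by ring, Nat.factorial_succ,
          Nat.factorial_succ]
        ring
      rw [show 2 * (n + 1) + 1 = 2 * n + 1 + 2 by ring, show 2 * (k + 1) + 1 = 2 * k + 1 + 2 by ring,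
        oddFiberCount_add_two, ih, show 2 * k + 1 + 2 = 2 * (k + 1) + 1 by ring, ih (k + 1), V,
        hfac]
      ring

theorem stmt18 (n k : ℕ) :
    V n k = Nat.card {P : Finpartition (Finset.univ : Finset (Fin (2 * n + 1))) //
      P.parts.card = 2 * k + 1 ∧ ∀ B ∈ P.parts, Odd B.card} := by
  have h := card_fiber_pred_eq_factorial_mul_card_finpartition
    (α := Fin (2 * n + 1)) (ι := Fin (2 * k + 1)) (p := Odd) (by decide)
  rw [← oddFiberCount, oddFiberCount_eq_factorial_mul_V, Fintype.card_fin] at h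
  exact Nat.eq_of_mul_eq_mul_left (Nat.factorial_pos _) h
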